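/- Let ρ1 = 1, ρ2 = 1+2a, ρ3 = 1+a, ρ4 = 1 for an even nonnegative integer a. Consider the set S of values |1 + Σ_{j=1}^4 (μ_j+ρ_j)σ_j − 2p δ| where σ_j, δ ∈ {−1,1}, p ∈ Z, and μ = (μ_1,…,μ_4) ∈ Z^4 satisfies μ_1 ≥ |p|, μ_2 ≥ μ_3 ≥ μ_4 ≥ |p|, and μ_j ≡ p (mod 2) for all j, with μ+σ and p+δ also satisfying these conditions. Then the minimum of S is 1. -/
import Mathlib


/-- Admissibility (Cartan–Helgason–Schlichtkrull, quaternionic case):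
`μ₁ ≥ |p|`, `μ₂ ≥ μ₃ ≥ μ₄ ≥ |p|`, and `μⱼ ≡ p (mod 2)` for all `j`. -/
def AdmissibleQuat (μ : Fin 4 → ℤ) (p : ℤ) : Prop :=
  |p| ≤ μ 0 ∧ μ 2 ≤ μ 1 ∧ μ 3 ≤ μ 2 ∧ |p| ≤ μ 3 ∧ ∀ j, μ j % 2 = p % 2

/-- With `ρ = (1, 1+2a, 1+a, 1)` for an even `a ≥ 0`, the minimum of
`|1 + ∑ⱼ(μⱼ+ρⱼ)σⱼ - 2pδ|` over admissible data with `(μ+σ, p+δ)` also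
admissible equals `1`. -/
theorem complementary_series_min_even_a (a : ℤ) (ha : 0 ≤ a) (hae : Even a) :
    IsLeast { x : ℤ | ∃ (μ σ : Fin 4 → ℤ) (p δ : ℤ),
      (∀ j, σ j = 1 ∨ σ j = -1) ∧ (δ = 1 ∨ δ = -1) ∧
      AdmissibleQuat μ p ∧ AdmissibleQuat (fun j => μ j + σ j) (p + δ) ∧
      x = |1 + ((μ 0 + 1) * σ 0 + (μ 1 + (1 + 2 * a)) * σ 1
            + (μ 2 + (1 + a)) * σ 2 + (μ 3 + 1) * σ 3) - 2 * p * δ| } 1 := by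
  obtain ⟨k, hk⟩ := hae
  constructor
  · refine ⟨![0, a + 4, a + 2, a + 2], ![1, 1, -1, -1], 0, 1, ?_, Or.inl rfl, ?_, ?_, ?_⟩
    · intro j; fin_cases j <;> simp
    · refine ⟨?_, ?_, ?_, ?_, ?_⟩ <;> simp <;> try omega
      intro j; fin_cases j <;> simp <;> omega
    · refine ⟨?_, ?_, ?_, ?_, ?_⟩ <;> simp <;> try omega
      intro j; fin_cases j <;> simp <;> omega
    · simp
      have h : 1 + (1 + (a + 4 + (1 + 2 * a)) + (-a + -1 + (-2 + -a)) + (-1 + (-2 + -a)))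
          = 1 := by ring
      rw [h]; norm_num
  · rintro x ⟨μ, σ, p, δ, hσ, hδ, ⟨h1, h2, h3, h4, h5⟩, hadm', rfl⟩
    have e0 := hσ 0; have e1 := hσ 1; have e2 := hσ 2; have e3 := hσ 3
    have m0 := h5 0; have m1 := h5 1; have m2 := h5 2; have m3 := h5 3
    clear h1 h2 h3 h4 h5 hadm' hσ
    apply Int.one_le_abs
    rcases e0 with r0 | r0 <;> rcases e1 with r1 | r1 <;> rcases e2 with r2 | r2 <;>
      rcases e3 with r3 | r3 <;> rcases hδ with rδ | rδ <;>
      rw [r0, r1, r2, r3, rδ] <;> omega
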